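/- Let α ∈ [0,1), let f(α) = 20 if α ∈ [0,1/2], f(α) = 25 if α ∈ (1/2,5/7], and f(α) = 7/(1−α) + 3 if α ∈ (5/7,1). Let s ≥ 4 be an even integer and let n be an integer with n ≥ f(α) and n ≥ 5s/2 + 3. Then the A_α-spectral radius of G = K_s ∨ (K_{n−s−3s/2−1} ∪ (3s/2+1)K₁) satisfies ρ_α(G) < n − 3. -/

import Mathlib

open Finset

/-- The join `G ∨g H` of two graphs: the disjoint union together with all edges
between the two parts. -/
def SimpleGraph.gjoin {α β : Type*} (G : SimpleGraph α) (H : SimpleGraph β) :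
    SimpleGraph (α ⊕ β) where
  Adj u v := match u, v with
    | Sum.inl u, Sum.inl v => G.Adj u v
    | Sum.inr u, Sum.inr v => H.Adj u v
    | _, _ => True
  symm := ⟨fun u v => match u, v with
    | Sum.inl u, Sum.inl v => G.adj_symm
    | Sum.inr u, Sum.inr v => H.adj_symm
    | Sum.inl _, Sum.inr _ | Sum.inr _, Sum.inl _ => fun _ => trivial⟩
  loopless := ⟨fun u => by cases u <;> simp⟩

infixl:60 " ∨g " => SimpleGraph.gjoin

/-- The `A_α`-matrix `α • D(G) + (1-α) • A(G)` of a graph `G`. -/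
noncomputable def aAlphaMatrix {V : Type*} [Fintype V] [DecidableEq V]
    (α : ℝ) (G : SimpleGraph V) : Matrix V V ℝ := by
  classical
  exact α • Matrix.diagonal (fun v => (G.degree v : ℝ)) + (1 - α) • G.adjMatrix ℝ

/-- The `A_α`-spectral radius `ρ_α(G)`: the largest eigenvalue of `A_α(G)`. -/
noncomputable def rhoAlpha {V : Type*} [Fintype V] [DecidableEq V]
    (α : ℝ) (G : SimpleGraph V) : ℝ :=
  sSup (spectrum ℝ (aAlphaMatrix α G))

/-- The signless Laplacian matrix `Q(G) = D(G) + A(G)`. -/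
noncomputable def signlessLaplacian {V : Type*} [Fintype V] [DecidableEq V]
    (G : SimpleGraph V) : Matrix V V ℝ := by
  classical
  exact Matrix.diagonal (fun v => (G.degree v : ℝ)) + G.adjMatrix ℝ

/-- `q(G)`: the largest eigenvalue of the signless Laplacian matrix of `G`. -/
noncomputable def qIndex {V : Type*} [Fintype V] [DecidableEq V]
    (G : SimpleGraph V) : ℝ :=
  sSup (spectrum ℝ (signlessLaplacian G))

/-- The number of edges (the size) of a graph. -/
noncomputable def edgeCount {V : Type*} [Fintype V] [DecidableEq V]
    (G : SimpleGraph V) : ℕ := by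
  classical
  exact G.edgeFinset.card

/-- `i(G - S)`: the number of isolated vertices of the graph obtained from `G`
by deleting the vertices of `S` together with all edges incident to `S`. -/
noncomputable def isolGminus {V : Type*} [Fintype V] [DecidableEq V]
    (G : SimpleGraph V) (S : Finset V) : ℕ := by
  classical
  exact (Finset.univ.filter (fun v => v ∉ S ∧ ∀ u, G.Adj v u → u ∈ S)).card

/-- `F(n)`: the edge bound from Theorem 1.1. -/
def Fbound (n : ℕ) : ℕ :=
  if n = 6 then 9 else if n = 8 then 18 else (n - 2).choose 2 + 2

/-- `f(α)`: the order bound from Theorem 1.2. -/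
noncomputable def fAlpha (α : ℝ) : ℝ :=
  if α ≤ 1 / 2 then 20 else if α ≤ 5 / 7 then 25 else 7 / (1 - α) + 3

/-!
The bound comes from a Collatz–Wielandt argument: if a matrix with nonnegative entries and a
positive vector `c` satisfy `M c < t c` entrywise, then every real eigenvalue of `M` has absolute
value less than `t`. For `K_s ∨ (K_p ∪ qK₁)` take `c = 2 - α` on `K_s` and `c = 1 - α` elsewhere.
Since `α (2 - α) + (1 - α)² = 1`, the three row conditions for `t = s + p + q - 3` reduce to
`s + 2 < q`, `s + 3 < p + q` and `2 < (1 - α) (p + q - 2)`; for the graph of the theorem the last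
one follows from `n ≥ f(α)`, which gives `(1 - α) (n - 3) ≥ 44 / 7`.
-/

namespace Matrix

variable {V : Type*} [Fintype V] [DecidableEq V]

theorem exists_mulVec_eq_smul_of_mem_spectrum {K : Type*} [Field K] {M : Matrix V V K} {μ : K}
    (hμ : μ ∈ spectrum K M) : ∃ x ≠ 0, M *ᵥ x = μ • x := by
  have h : Module.End.HasEigenvalue (Matrix.toLin' M) μ := by
    rwa [Module.End.hasEigenvalue_iff_mem_spectrum, Matrix.spectrum_toLin']
  obtain ⟨x, hx⟩ := h.exists_hasEigenvector
  exact ⟨x, hx.2, by simpa using hx.apply_eq_smul⟩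

/-- Compare an eigenvector `x` with `c` at an index where `|x j| / c j` is maximal. -/
theorem abs_lt_of_mem_spectrum_of_mulVec_lt {M : Matrix V V ℝ} (hM : ∀ i j, 0 ≤ M i j)
    {c : V → ℝ} (hc : ∀ i, 0 < c i) {t : ℝ} (hMc : ∀ i, (M *ᵥ c) i < t * c i) {μ : ℝ}
    (hμ : μ ∈ spectrum ℝ M) : |μ| < t := by
  obtain ⟨x, hx0, hMx⟩ := exists_mulVec_eq_smul_of_mem_spectrum hμ
  have : Nonempty V := by
    by_contra hV
    exact hx0 (funext fun j => (not_nonempty_iff.mp hV).elim j)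
  obtain ⟨i, -, hi⟩ := Finset.exists_max_image univ (fun j => |x j| / c j) univ_nonempty
  set r := |x i| / c i
  have hxj : ∀ j, |x j| ≤ r * c j := fun j =>
    (div_le_iff₀ (hc j)).mp (hi j (mem_univ j))
  have hr_pos : 0 < r := by
    obtain ⟨j, hj⟩ := Function.ne_iff.mp hx0
    exact (div_pos (abs_pos.mpr hj) (hc j)).trans_le (hi j (mem_univ j))
  have hr : |x i| = r * c i := (div_mul_cancel₀ _ (hc i).ne').symm
  have hxi : 0 < |x i| := hr ▸ mul_pos hr_pos (hc i)
  have key : |μ| * |x i| < t * |x i| :=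
    calc |μ| * |x i| = |∑ j, M i j * x j| := by
          rw [← abs_mul, ← smul_eq_mul, ← Pi.smul_apply, ← hMx]; rfl
      _ ≤ ∑ j, M i j * (r * c j) := by
          refine (abs_sum_le_sum_abs _ _).trans (sum_le_sum fun j _ => ?_)
          rw [abs_mul, abs_of_nonneg (hM i j)]
          exact mul_le_mul_of_nonneg_left (hxj j) (hM i j)
      _ = r * (M *ᵥ c) i := by
          simp only [mulVec, dotProduct, mul_sum]
          exact sum_congr rfl fun j _ => by ring
      _ < t * |x i| := by
          rw [hr, mul_left_comm]
          exact mul_lt_mul_of_pos_left (hMc i) hr_pos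
  exact lt_of_mul_lt_mul_right key hxi.le

theorem sSup_spectrum_lt_of_mulVec_lt [Nonempty V] {M : Matrix V V ℝ} (hM : ∀ i j, 0 ≤ M i j)
    {c : V → ℝ} (hc : ∀ i, 0 < c i) {t : ℝ} (hMc : ∀ i, (M *ᵥ c) i < t * c i) :
    sSup (spectrum ℝ M) < t := by
  rcases (spectrum ℝ M).eq_empty_or_nonempty with h | h
  · obtain ⟨i⟩ := ‹Nonempty V›
    have hMc_nonneg : 0 ≤ (M *ᵥ c) i :=
      sum_nonneg fun j _ => mul_nonneg (hM i j) (hc j).le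
    rw [h, Real.sSup_empty]
    exact pos_of_mul_pos_left (hMc_nonneg.trans_lt (hMc i)) (hc i).le
  · exact (le_abs_self _).trans_lt <| abs_lt_of_mem_spectrum_of_mulVec_lt hM hc hMc <|
      h.csSup_mem (finite_spectrum M)

end Matrix

namespace SimpleGraph

variable {α β : Type*} {G : SimpleGraph α} {H : SimpleGraph β}

@[simp] theorem gjoin_adj_inl_inl {a a' : α} : (G ∨g H).Adj (.inl a) (.inl a') ↔ G.Adj a a' :=
  Iff.rfl

@[simp] theorem gjoin_adj_inl_inr {a : α} {b : β} : (G ∨g H).Adj (.inl a) (.inr b) :=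
  trivial

@[simp] theorem gjoin_adj_inr_inl {a : α} {b : β} : (G ∨g H).Adj (.inr b) (.inl a) :=
  trivial

@[simp] theorem gjoin_adj_inr_inr {b b' : β} : (G ∨g H).Adj (.inr b) (.inr b') ↔ H.Adj b b' :=
  Iff.rfl

instance gjoin.adjDecidable [DecidableRel G.Adj] [DecidableRel H.Adj] :
    DecidableRel (G ∨g H).Adj
  | .inl a, .inl a' => inferInstanceAs (Decidable (G.Adj a a'))
  | .inl _, .inr _ | .inr _, .inl _ => isTrue trivial
  | .inr b, .inr b' => inferInstanceAs (Decidable (H.Adj b b'))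

instance sum.adjDecidable [DecidableRel G.Adj] [DecidableRel H.Adj] :
    DecidableRel (G ⊕g H).Adj
  | .inl a, .inl a' => inferInstanceAs (Decidable (G.Adj a a'))
  | .inl _, .inr _ | .inr _, .inl _ => isFalse (by simp)
  | .inr b, .inr b' => inferInstanceAs (Decidable (H.Adj b b'))

theorem sum_top_adj_ite {V : Type*} [Fintype V] [DecidableEq V] (v : V) (a : ℝ) :
    (∑ w, if (⊤ : SimpleGraph V).Adj v w then a else 0) = (Fintype.card V - 1) * a := by
  have h : ∀ w, (if (⊤ : SimpleGraph V).Adj v w then a else 0) = a - if v = w then a else 0 :=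
    fun w => by by_cases h : v = w <;> simp [h]
  rw [Finset.sum_congr rfl fun w _ => h w, Finset.sum_sub_distrib, Finset.sum_ite_eq]
  simp [sub_one_mul]

end SimpleGraph

section AAlpha

variable {V : Type*} [Fintype V] [DecidableEq V]

open Matrix

theorem aAlphaMatrix_nonneg {α : ℝ} (h0 : 0 ≤ α) (h1 : α ≤ 1) (G : SimpleGraph V) (i j : V) :
    0 ≤ aAlphaMatrix α G i j := by
  classical
  simp only [aAlphaMatrix, Matrix.add_apply, Matrix.smul_apply, smul_eq_mul,
    Matrix.diagonal_apply, SimpleGraph.adjMatrix_apply]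
  exact add_nonneg (mul_nonneg h0 (by split_ifs <;> positivity))
    (mul_nonneg (sub_nonneg.2 h1) (by split_ifs <;> positivity))

theorem aAlphaMatrix_mulVec_apply (α : ℝ) (G : SimpleGraph V) [DecidableRel G.Adj] (x : V → ℝ)
    (v : V) :
    (aAlphaMatrix α G *ᵥ x) v = ∑ w, if G.Adj v w then α * x v + (1 - α) * x w else 0 := by
  simp only [aAlphaMatrix, Matrix.add_mulVec, Matrix.smul_mulVec, Pi.add_apply, Pi.smul_apply,
    smul_eq_mul, Matrix.mulVec_diagonal, SimpleGraph.adjMatrix_mulVec_apply,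
    SimpleGraph.degree, SimpleGraph.neighborFinset_eq_filter, Finset.sum_filter,
    Finset.card_filter, Nat.cast_sum, Finset.sum_mul, Finset.mul_sum, ← Finset.sum_add_distrib]
  exact Finset.sum_congr rfl fun w _ => by split_ifs <;> simp

end AAlpha

theorem rhoAlpha_top_gjoin_top_sum_bot_lt {α : ℝ} (h0 : 0 ≤ α) (h1 : α < 1) {s p q : ℕ}
    (hq : s + 2 < q) (hpq : s + 3 < p + q) (hα : 2 < (1 - α) * (p + q - 2)) :
    rhoAlpha α ((⊤ : SimpleGraph (Fin s)) ∨g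
        ((⊤ : SimpleGraph (Fin p)) ⊕g (⊥ : SimpleGraph (Fin q))))
      < s + p + q - 3 := by
  have : Nonempty (Fin s ⊕ (Fin p ⊕ Fin q)) := ⟨.inr (.inr ⟨0, by omega⟩)⟩
  have hq' : (s : ℝ) + 2 < q := by exact_mod_cast hq
  have hpq' : (s : ℝ) + 3 < p + q := by exact_mod_cast hpq
  have hb : 0 < 1 - α := sub_pos.mpr h1
  let c : Fin s ⊕ (Fin p ⊕ Fin q) → ℝ := Sum.elim (fun _ => 2 - α) (fun _ => 1 - α)
  refine Matrix.sSup_spectrum_lt_of_mulVec_lt (aAlphaMatrix_nonneg h0 h1.le _) (c := c)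
    (by rintro (_ | _) <;> simp [c] <;> linarith) ?_
  rintro (i | i | i) <;>
    simp only [aAlphaMatrix_mulVec_apply, Fintype.sum_sum_type, c, Sum.elim_inl, Sum.elim_inr,
      SimpleGraph.gjoin_adj_inl_inl, SimpleGraph.gjoin_adj_inl_inr, SimpleGraph.gjoin_adj_inr_inl,
      SimpleGraph.gjoin_adj_inr_inr, SimpleGraph.sum_adj, SimpleGraph.bot_adj,
      SimpleGraph.sum_top_adj_ite, if_true, if_false, Finset.sum_const_zero, Finset.sum_const,
      Finset.card_univ, Fintype.card_sum, Fintype.card_fin, nsmul_eq_mul, add_zero]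
  all_goals
    push_cast
    nlinarith

theorem le_one_sub_mul_of_fAlpha_le {α x : ℝ} (hα : α < 1) (h : fAlpha α ≤ x) :
    44 / 7 ≤ (1 - α) * (x - 3) := by
  unfold fAlpha at h
  split_ifs at h with h12 h57
  · nlinarith
  · nlinarith
  · have : 7 / (1 - α) ≤ x - 3 := by linarith
    rw [div_le_iff₀ (sub_pos.mpr hα)] at this
    linarith

theorem rhoAlpha_case1_even_lt_general (α : ℝ) (hα0 : 0 ≤ α) (hα1 : α < 1)
    (s n : ℕ) (hs : 4 ≤ s) (hfn : fAlpha α ≤ (n : ℝ))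
    (hn : 5 * s / 2 + 3 ≤ n) :
    rhoAlpha α ((⊤ : SimpleGraph (Fin s)) ∨g
        ((⊤ : SimpleGraph (Fin (n - s - 3 * s / 2 - 1))) ⊕g
          (⊥ : SimpleGraph (Fin (3 * s / 2 + 1)))))
      < (n : ℝ) - 3 := by
  set p := n - s - 3 * s / 2 - 1
  set q := 3 * s / 2 + 1
  have hsum : (s : ℝ) + p + q = n := by exact_mod_cast (show s + p + q = n by omega)
  have hbound : 44 / 7 ≤ (1 - α) * (n - 3) := le_one_sub_mul_of_fAlpha_le hα1 hfn
  have hpq : 3 * ((n : ℝ) - 3) ≤ 5 * (p + q - 2) := by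
    have : (3 * n + 5 : ℝ) ≤ 5 * ((p : ℝ) + q) := by
      exact_mod_cast (show 3 * n + 5 ≤ 5 * (p + q) by omega)
    linarith
  have hα : 2 < (1 - α) * (p + q - 2) := by
    nlinarith [mul_le_mul_of_nonneg_left hpq (sub_nonneg.mpr hα1.le)]
  calc _ < (s + p + q - 3 : ℝ) :=
        rhoAlpha_top_gjoin_top_sum_bot_lt hα0 hα1 (by omega) (by omega) hα
    _ = n - 3 := by rw [hsum]

theorem rhoAlpha_case1_even_lt (α : ℝ) (hα0 : 0 ≤ α) (hα1 : α < 1)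
    (s n : ℕ) (heven : Even s) (hs : 4 ≤ s) (hfn : fAlpha α ≤ (n : ℝ))
    (hn : 5 * s / 2 + 3 ≤ n) :
    rhoAlpha α ((⊤ : SimpleGraph (Fin s)) ∨g
        ((⊤ : SimpleGraph (Fin (n - s - 3 * s / 2 - 1))) ⊕g
          (⊥ : SimpleGraph (Fin (3 * s / 2 + 1)))))
      < (n : ℝ) - 3 :=
  rhoAlpha_case1_even_lt_general α hα0 hα1 s n hs hfn hn
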